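/- arXiv:1505.02719 — 5 statements merged into one kernel-verified Lean document; each statement's English description precedes it below -/
import Mathlib

section
/- Let A, B be bounded operators on a complex Hilbert space and suppose B is positive with (unique positive) square root P. Then σ(AB) = σ(BA) = σ(PAP). -/
/-!
Away from `0`, the spectra of `x * y` and `y * x` agree in any algebra. At `0` the question is
about invertibility, and a self-adjoint element with a one-sided inverse is invertible; hence each
of `A * B`, `B * A` and `P * A * P` is invertible exactly when `A` and `B` are.
-/

namespace IsSelfAdjoint

variable {M : Type*} [Monoid M] [StarMul M] {a b : M}

/-- Applying `star` to a left inverse of `b` gives a right inverse. -/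
theorem isUnit_of_mul_eq_one (hb : IsSelfAdjoint b) (h : a * b = 1) : IsUnit b := by
  have h' : b * star a = 1 := by simpa only [star_mul, hb.star_eq, star_one] using congr_arg star h
  exact isUnit_iff_exists.2 ⟨a, left_inv_eq_right_inv h h' ▸ h', h⟩

theorem isUnit_of_isUnit_mul (hb : IsSelfAdjoint b) (h : IsUnit (a * b)) : IsUnit b := by
  obtain ⟨u, hu⟩ := h
  exact hb.isUnit_of_mul_eq_one (a := ↑u⁻¹ * a) (by rw [mul_assoc, ← hu, u.inv_mul])

theorem isUnit_mul_right_iff (hb : IsSelfAdjoint b) : IsUnit (a * b) ↔ IsUnit a ∧ IsUnit b :=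
  ⟨fun h ↦ have hb' := hb.isUnit_of_isUnit_mul h; ⟨hb'.mul_right_iff.1 h, hb'⟩,
    fun h ↦ h.1.mul h.2⟩

theorem isUnit_mul_left_iff (ha : IsSelfAdjoint a) : IsUnit (a * b) ↔ IsUnit a ∧ IsUnit b := by
  rw [← isUnit_star, star_mul, ha.star_eq, ha.isUnit_mul_right_iff, isUnit_star, and_comm]

theorem isUnit_mul_mul_iff (ha : IsSelfAdjoint a) : IsUnit (a * b * a) ↔ IsUnit a ∧ IsUnit b := by
  rw [ha.isUnit_mul_right_iff, ha.isUnit_mul_left_iff]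
  tauto

end IsSelfAdjoint

theorem spectrum.mul_comm_of_isUnit_iff {𝕜 R : Type*} [Field 𝕜] [Ring R] [Algebra 𝕜 R] {a b : R}
    (h : IsUnit (a * b) ↔ IsUnit (b * a)) : spectrum 𝕜 (a * b) = spectrum 𝕜 (b * a) := by
  ext z
  rcases eq_or_ne z 0 with rfl | hz
  · simp only [spectrum.zero_mem_iff, h]
  · simpa [hz] using Set.ext_iff.1 (spectrum.nonzero_mul_comm a b) z

variable {H : Type*} [NormedAddCommGroup H] [InnerProductSpace ℂ H] [CompleteSpace H]

theorem stmt_4 (A B P : H →L[ℂ] H) (hB : B.IsPositive) (hP : P.IsPositive)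
    (hP2 : P * P = B) :
    spectrum ℂ (A * B) = spectrum ℂ (B * A) ∧
      spectrum ℂ (B * A) = spectrum ℂ (P * A * P) := by
  have hB' := hB.isSelfAdjoint
  have hP' := hP.isSelfAdjoint
  have hPB : IsUnit P ↔ IsUnit B := by rw [← hP2, hP'.isUnit_mul_left_iff, and_self]
  refine ⟨spectrum.mul_comm_of_isUnit_iff ?_, ?_⟩
  · rw [hB'.isUnit_mul_right_iff, hB'.isUnit_mul_left_iff, and_comm]
  · rw [← hP2, mul_assoc P P A]
    refine spectrum.mul_comm_of_isUnit_iff ?_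
    rw [← mul_assoc, hP2, hB'.isUnit_mul_left_iff, hP'.isUnit_mul_mul_iff, hPB]
end

section
/- Let A, B be bounded operators on a complex Hilbert space such that at least one of them is normal. Then σ(AB) = σ(BA). -/
/-!
Away from `0` the spectra of `AB` and `BA` agree in any unital algebra (Jacobson's lemma), so
only invertibility has to be compared. If `A` is normal and `AB` is invertible, then `A` is
surjective, and normality gives `ker A = (range A)ᗮ = 0`; hence `A`, then `B = A⁻¹(AB)`, and so
`BA` are invertible. The case of normal `B` reduces to this one by taking adjoints.
-/

variable {H : Type*} [NormedAddCommGroup H] [InnerProductSpace ℂ H] [CompleteSpace H]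

theorem spectrum.mul_comm_of_isUnit_mul_iff {𝕜 A : Type*} [Field 𝕜] [Ring A] [Algebra 𝕜 A]
    {a b : A} (h : IsUnit (a * b) ↔ IsUnit (b * a)) : spectrum 𝕜 (a * b) = spectrum 𝕜 (b * a) := by
  ext z
  rcases eq_or_ne z 0 with rfl | hz
  · simp only [spectrum.zero_mem_iff, h]
  · simpa [hz] using Set.ext_iff.1 (spectrum.nonzero_mul_comm a b) z

namespace ContinuousLinearMap

variable {𝕜 E : Type*} [RCLike 𝕜] [NormedAddCommGroup E] [InnerProductSpace 𝕜 E] [CompleteSpace E]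
  {S T : E →L[𝕜] E}

theorem IsStarNormal.isUnit_of_surjective (hT : IsStarNormal T) (h : Function.Surjective T) :
    IsUnit T := by
  refine isUnit_iff_bijective.2 ⟨?_, h⟩
  rw [← coe_coe, ← LinearMap.ker_eq_bot, ← IsStarNormal.orthogonal_range hT,
    LinearMap.range_eq_top.2 h, Submodule.top_orthogonal_eq_bot]

theorem IsStarNormal.isUnit_of_isUnit_mul_right (hT : IsStarNormal T) (h : IsUnit (T * S)) :
    IsUnit T := by
  have hTS : Function.Surjective (T ∘ S) := (isUnit_iff_bijective.1 h).2
  exact IsStarNormal.isUnit_of_surjective hT hTS.of_comp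

theorem IsStarNormal.isUnit_of_isUnit_mul_left (hT : IsStarNormal T) (h : IsUnit (S * T)) :
    IsUnit T := by
  have hstar : IsUnit (star T * star S) := by simpa only [star_mul] using h.star
  simpa using (IsStarNormal.isUnit_of_isUnit_mul_right hT.star hstar).star

theorem isUnit_mul_comm_of_isStarNormal (h : IsStarNormal S ∨ IsStarNormal T)
    (hST : IsUnit (S * T)) : IsUnit (T * S) := by
  rcases h with hS | hT
  · have hS' := IsStarNormal.isUnit_of_isUnit_mul_right hS hST
    exact (hS'.mul_left_iff.1 hST).mul hS'
  · have hT' := IsStarNormal.isUnit_of_isUnit_mul_left hT hST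
    exact hT'.mul (hT'.mul_right_iff.1 hST)

end ContinuousLinearMap

theorem stmt_5 (A B : H →L[ℂ] H) (h : IsStarNormal A ∨ IsStarNormal B) :
    spectrum ℂ (A * B) = spectrum ℂ (B * A) :=
  spectrum.mul_comm_of_isUnit_mul_iff
    ⟨ContinuousLinearMap.isUnit_mul_comm_of_isStarNormal h,
      ContinuousLinearMap.isUnit_mul_comm_of_isStarNormal h.symm⟩
end

section
/- Let A, B be bounded operators on a complex Hilbert space with A positive and B self-adjoint. If AB is hyponormal, then AB is self-adjoint. -/
/-! The spectrum of `A * B` agrees away from `0` with that of the self-adjoint operator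
`√A * B * √A`, so it is real. A hyponormal `T` satisfies `‖T ^ n‖ = ‖T‖ ^ n`, so its norm is its
spectral radius; as hyponormality passes to `T - γ` and to inverses, this gives
`‖(T - γ)⁻¹‖ ≤ 1 / |Im γ|` for non-real `γ` when `σ(T) ⊆ ℝ`. With `γ = s * I`, the estimate
`s² ‖v‖² ≤ ‖(T - s * I) v‖² = ‖T v‖² + 2 s Im ⟪T v, v⟫ + s² ‖v‖²` for all real `s` forces
`Im ⟪T v, v⟫ = 0`, i.e. `T` is self-adjoint. -/

open Filter
open scoped InnerProductSpace Topology ENNReal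

variable {H : Type*} [NormedAddCommGroup H] [InnerProductSpace ℂ H] [CompleteSpace H]

lemma ContinuousLinearMap.norm_pow_apply_le {𝕜 E : Type*} [NontriviallyNormedField 𝕜]
    [SeminormedAddCommGroup E] [NormedSpace 𝕜 E] (T : E →L[𝕜] E) (n : ℕ) (x : E) :
    ‖(T ^ n) x‖ ≤ ‖T‖ ^ n * ‖x‖ := by
  induction n with
  | zero => simp
  | succ n ih =>
    calc ‖(T ^ (n + 1)) x‖ = ‖T ((T ^ n) x)‖ := by rw [pow_succ']; rfl
      _ ≤ ‖T‖ * (‖T‖ ^ n * ‖x‖) := (T.le_opNorm _).trans (by gcongr)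
      _ = ‖T‖ ^ (n + 1) * ‖x‖ := by ring

lemma spectrum.spectralRadius_eq_nnnorm_of_norm_pow_succ {A : Type*} [NormedRing A]
    [NormedAlgebra ℂ A] [CompleteSpace A] {a : A} (h : ∀ n : ℕ, ‖a ^ (n + 1)‖ = ‖a‖ ^ (n + 1)) :
    spectralRadius ℂ a = ‖a‖₊ := by
  have hconst : Tendsto (fun _ : ℕ => (‖a‖₊ : ℝ≥0∞)) atTop (𝓝 (spectralRadius ℂ a)) := by
    refine ((spectrum.pow_nnnorm_pow_one_div_tendsto_nhds_spectralRadius a).comp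
      (tendsto_add_atTop_nat 1)).congr fun n => ?_
    have hn : ‖a ^ (n + 1)‖₊ = ‖a‖₊ ^ (n + 1) := NNReal.eq <| by simpa using h n
    rw [Function.comp_apply, hn, ENNReal.coe_pow, ← ENNReal.rpow_natCast, ← ENNReal.rpow_mul,
      Nat.cast_succ, mul_one_div_cancel (by positivity), ENNReal.rpow_one]
  exact (tendsto_const_nhds_iff.mp hconst).symm

lemma spectrum.spectralRadius_inv_le {A : Type*} [NormedRing A] [NormedAlgebra ℂ A] (u : Aˣ)
    {d : ℝ} (hd : 0 < d) (hσ : ∀ μ ∈ spectrum ℂ (u : A), d ≤ ‖μ‖) :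
    spectralRadius ℂ (↑u⁻¹ : A) ≤ ENNReal.ofReal d⁻¹ := by
  refine iSup₂_le fun μ hμ => ?_
  rw [← spectrum.map_inv, Set.mem_inv] at hμ
  rw [← ENNReal.ofReal_coe_nnreal, coe_nnnorm]
  exact ENNReal.ofReal_le_ofReal (by simpa using inv_anti₀ hd (hσ _ hμ))

namespace ContinuousLinearMap

lemma isSelfAdjoint_of_forall_abs_mul_norm_le {T : H →L[ℂ] H}
    (h : ∀ (s : ℝ) (v : H), |s| * ‖v‖ ≤ ‖(T - (s * Complex.I) • 1) v‖) : IsSelfAdjoint T := by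
  rw [isSelfAdjoint_iff_isSymmetric, LinearMap.isSymmetric_iff_inner_map_self_real]
  intro v
  rw [Complex.conj_eq_iff_im]
  have hlin : ∀ s : ℝ, 0 ≤ ‖T v‖ ^ 2 + s * (2 * (⟪T v, v⟫_ℂ).im) := by
    intro s
    have hsq : (|s| * ‖v‖) ^ 2 ≤ ‖T v - (s * Complex.I) • v‖ ^ 2 := by
      simpa using pow_le_pow_left₀ (by positivity) (h s v) 2
    have hexp : ‖T v - (s * Complex.I) • v‖ ^ 2
        = ‖T v‖ ^ 2 + s * (2 * (⟪T v, v⟫_ℂ).im) + (|s| * ‖v‖) ^ 2 := by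
      rw [@norm_sub_sq ℂ, inner_smul_right, norm_smul, RCLike.re_to_complex, mul_assoc,
        Complex.re_ofReal_mul, Complex.I_mul_re, Complex.norm_mul, Complex.norm_real,
        Complex.norm_I, Real.norm_eq_abs]
      ring
    linarith
  by_contra him
  have := hlin (-(|‖T v‖ ^ 2| + 1) / (2 * (⟪T v, v⟫_ℂ).im))
  rw [div_mul_cancel₀ _ (by simpa using him)] at this
  linarith [le_abs_self (‖T v‖ ^ 2)]

variable {𝕜 E : Type*} [RCLike 𝕜] [NormedAddCommGroup E] [InnerProductSpace 𝕜 E] [CompleteSpace E]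

def IsHyponormal (T : E →L[𝕜] E) : Prop :=
  ∀ x, ‖(star T) x‖ ≤ ‖T x‖

namespace IsHyponormal

variable {T : E →L[𝕜] E}

lemma sub_smul_one (hT : T.IsHyponormal) (γ : 𝕜) : (T - γ • 1).IsHyponormal := by
  intro x
  have key : ‖(T - γ • 1) x‖ ^ 2 - ‖(star (T - γ • 1)) x‖ ^ 2 = ‖T x‖ ^ 2 - ‖(star T) x‖ ^ 2 := by
    simp only [star_sub, star_smul, star_one, sub_apply, smul_apply, one_apply_eq_self,
      @norm_sub_sq 𝕜, norm_smul, RCLike.star_def, RCLike.norm_conj, inner_smul_right,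
      star_eq_adjoint, adjoint_inner_left]
    rw [← inner_conj_symm x, ← map_mul, RCLike.conj_re]
    ring
  have hsq := pow_le_pow_left₀ (norm_nonneg _) (hT x) 2
  exact (pow_le_pow_iff_left₀ (norm_nonneg _) (norm_nonneg _) two_ne_zero).mp (by linarith)

lemma of_mul_eq_one {S S' : E →L[𝕜] E} (hS : S.IsHyponormal) (h : S * S' = 1) :
    S'.IsHyponormal := by
  have hSS' : ∀ z, S (S' z) = z := DFunLike.congr_fun h
  have hC : ‖star S * S'‖ ≤ 1 := by
    refine opNorm_le_bound _ zero_le_one fun z => ?_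
    simpa [hSS'] using hS (S' z)
  intro x
  calc ‖(star S') x‖ = ‖(star (star S * S')) (S' x)‖ := by simp [star_mul, hSS']
    _ ≤ ‖star (star S * S')‖ * ‖S' x‖ := le_opNorm _ _
    _ ≤ ‖S' x‖ := by
        rw [star_eq_adjoint, adjoint.norm_map]
        exact mul_le_of_le_one_left (norm_nonneg _) hC

lemma norm_pow_succ_apply_sq_le (hT : T.IsHyponormal) (n : ℕ) (x : E) :
    ‖(T ^ (n + 1)) x‖ ^ 2 ≤ ‖(T ^ n) x‖ * ‖(T ^ (n + 2)) x‖ := by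
  have hpow : ∀ m, (T ^ (m + 1)) x = T ((T ^ m) x) := fun m => by rw [pow_succ']; rfl
  calc ‖(T ^ (n + 1)) x‖ ^ 2 = ‖⟪(T ^ n) x, (star T) ((T ^ (n + 1)) x)⟫_𝕜‖ := by
        rw [star_eq_adjoint, adjoint_inner_right, ← hpow, inner_self_eq_norm_sq_to_K]
        simp
    _ ≤ ‖(T ^ n) x‖ * ‖(star T) ((T ^ (n + 1)) x)‖ := norm_inner_le_norm _ _
    _ ≤ ‖(T ^ n) x‖ * ‖(T ^ (n + 2)) x‖ := by
        gcongr
        rw [hpow (n + 1)]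
        exact hT _

lemma norm_pow_succ_sq_le (hT : T.IsHyponormal) (n : ℕ) :
    ‖T ^ (n + 1)‖ ^ 2 ≤ ‖T‖ ^ n * ‖T ^ (n + 2)‖ := by
  rw [← Real.le_sqrt (norm_nonneg _) (by positivity)]
  refine opNorm_le_bound _ (by positivity) fun x => ?_
  rw [← Real.sqrt_sq (norm_nonneg _), ← Real.sqrt_sq (norm_nonneg x),
    ← Real.sqrt_mul (by positivity)]
  gcongr
  calc ‖(T ^ (n + 1)) x‖ ^ 2 ≤ ‖(T ^ n) x‖ * ‖(T ^ (n + 2)) x‖ := hT.norm_pow_succ_apply_sq_le n x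
    _ ≤ ‖T‖ ^ n * ‖x‖ * (‖T ^ (n + 2)‖ * ‖x‖) := by
        gcongr
        exacts [norm_pow_apply_le T n x, le_opNorm _ _]
    _ = _ := by ring

lemma norm_pow_succ (hT : T.IsHyponormal) (n : ℕ) : ‖T ^ (n + 1)‖ = ‖T‖ ^ (n + 1) := by
  refine le_antisymm (norm_pow_le' T n.succ_pos) ?_
  induction n with
  | zero => simp
  | succ n ih =>
    rcases (norm_nonneg T).eq_or_lt with hT0 | hT0
    · simp [← hT0]
    refine le_of_mul_le_mul_left ?_ (pow_pos hT0 n)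
    calc ‖T‖ ^ n * ‖T‖ ^ (n + 2) = ‖T‖ ^ (n + 1) * ‖T‖ ^ (n + 1) := by ring
      _ ≤ ‖T ^ (n + 1)‖ ^ 2 := by rw [sq]; gcongr
      _ ≤ ‖T‖ ^ n * ‖T ^ (n + 2)‖ := hT.norm_pow_succ_sq_le n

lemma spectralRadius_eq_nnnorm {T : H →L[ℂ] H} (hT : T.IsHyponormal) :
    spectralRadius ℂ T = ‖T‖₊ :=
  spectrum.spectralRadius_eq_nnnorm_of_norm_pow_succ hT.norm_pow_succ

lemma mul_norm_le_norm_sub_smul_one_apply {T : H →L[ℂ] H} (hT : T.IsHyponormal) {γ : ℂ} {d : ℝ}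
    (hd : 0 < d) (hσ : ∀ z ∈ spectrum ℂ T, d ≤ ‖z - γ‖) (y : H) :
    d * ‖y‖ ≤ ‖(T - γ • 1) y‖ := by
  have hσS : ∀ μ ∈ spectrum ℂ (T - γ • 1), d ≤ ‖μ‖ := by
    intro μ hμ
    rw [← Algebra.algebraMap_eq_smul_one, ← spectrum.sub_singleton_eq] at hμ
    obtain ⟨z, hz, _, rfl, rfl⟩ := hμ
    exact hσ z hz
  obtain ⟨u, hu⟩ : IsUnit (T - γ • 1) :=
    spectrum.isUnit_of_zero_notMem ℂ fun h0 => by simpa using (hd.trans_le (hσS 0 h0))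
  have hinv : ‖(↑u⁻¹ : H →L[ℂ] H)‖ ≤ d⁻¹ := by
    have hyp : (↑u⁻¹ : H →L[ℂ] H).IsHyponormal :=
      (hT.sub_smul_one γ).of_mul_eq_one (by rw [← hu]; exact u.mul_inv)
    have := hyp.spectralRadius_eq_nnnorm ▸ spectrum.spectralRadius_inv_le u hd (hu ▸ hσS)
    rwa [← ENNReal.ofReal_coe_nnreal, coe_nnnorm,
      ENNReal.ofReal_le_ofReal_iff (by positivity)] at this
  have hy : (↑u⁻¹ : H →L[ℂ] H) ((u : H →L[ℂ] H) y) = y := DFunLike.congr_fun u.inv_mul y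
  calc d * ‖y‖ = d * ‖(↑u⁻¹ : H →L[ℂ] H) ((T - γ • 1) y)‖ := by rw [← hu, hy]
    _ ≤ d * (d⁻¹ * ‖(T - γ • 1) y‖) := by gcongr; exact le_of_opNorm_le _ hinv _
    _ = ‖(T - γ • 1) y‖ := by field_simp

lemma isSelfAdjoint {T : H →L[ℂ] H} (hT : T.IsHyponormal) (hσ : ∀ z ∈ spectrum ℂ T, z.im = 0) :
    IsSelfAdjoint T := by
  refine isSelfAdjoint_of_forall_abs_mul_norm_le fun s v => ?_
  rcases eq_or_ne s 0 with rfl | hs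
  · simp
  refine hT.mul_norm_le_norm_sub_smul_one_apply (abs_pos.mpr hs) (fun z hz => ?_) v
  simpa [hσ z hz] using Complex.abs_im_le_norm (z - s * Complex.I)

end IsHyponormal
end ContinuousLinearMap

lemma im_eq_zero_of_mem_spectrum_mul_of_nonneg {A : Type*} [CStarAlgebra A] [PartialOrder A]
    [StarOrderedRing A] {a b : A} (ha : 0 ≤ a) (hb : IsSelfAdjoint b) {z : ℂ}
    (hz : z ∈ spectrum ℂ (a * b)) : z.im = 0 := by
  rcases eq_or_ne z 0 with rfl | hz0
  · rfl
  have hsa : IsSelfAdjoint (CFC.sqrt a * b * CFC.sqrt a) :=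
    hb.conjugate_self (IsSelfAdjoint.of_nonneg (CFC.sqrt_nonneg a))
  have hz' : z ∈ spectrum ℂ (CFC.sqrt a * (CFC.sqrt a * b)) \ {0} := by
    rw [← mul_assoc, CFC.sqrt_mul_sqrt_self a ha]
    exact ⟨hz, hz0⟩
  rw [spectrum.nonzero_mul_comm] at hz'
  exact hsa.im_eq_zero_of_mem_spectrum hz'.1

theorem stmt_6 (A B : H →L[ℂ] H) (hA : A.IsPositive) (hB : IsSelfAdjoint B)
    (hhyp : ∀ x : H, ‖(ContinuousLinearMap.adjoint (A * B)) x‖ ≤ ‖(A * B) x‖) :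
    IsSelfAdjoint (A * B) :=
  ContinuousLinearMap.IsHyponormal.isSelfAdjoint hhyp fun _ =>
    im_eq_zero_of_mem_spectrum_mul_of_nonneg ((A.nonneg_iff_isPositive).mpr hA) hB
end

section
/- Let A be a closed densely defined operator on a complex Hilbert space with ker(A*) ⊆ ker(A). If A is left invertible (CA ⊆ I for some bounded C), then A is invertible. -/
open LinearPMap

variable {H : Type*} [NormedAddCommGroup H] [InnerProductSpace ℂ H] [CompleteSpace H]

/-- `A` is right invertible: `A ∘ B = I` for some bounded everywhere-defined `B`. -/
def PMapRightInv (A : H →ₗ.[ℂ] H) : Prop :=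
  ∃ B : H →L[ℂ] H, ∀ y : H, ∃ h : B y ∈ A.domain, A ⟨B y, h⟩ = y

/-- `A` is left invertible: `C ∘ A ⊆ I` for some bounded everywhere-defined `C`. -/
def PMapLeftInv (A : H →ₗ.[ℂ] H) : Prop :=
  ∃ C : H →L[ℂ] H, ∀ x : A.domain, C (A x) = x

/-- `A` is invertible: `A ∘ B = I` and `B ∘ A ⊆ I` for some bounded `B`. -/
def PMapInv (A : H →ₗ.[ℂ] H) : Prop :=
  ∃ B : H →L[ℂ] H, (∀ y : H, ∃ h : B y ∈ A.domain, A ⟨B y, h⟩ = y) ∧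
    ∀ x : A.domain, B (A x) = x

/-!
A left inverse `C` makes `A` injective, and since `range A` is the preimage of the closed graph
of `A` under the continuous map `z ↦ (C z, z)`, the range is closed. A vector orthogonal to the
range lies in `ker A† ⊆ ker A = 0`, so the range is everything and `C` is a two-sided inverse.
-/

namespace LinearPMap

section LeftInverse

variable {R E F : Type*} [CommRing R] [AddCommGroup E] [Module R E] [TopologicalSpace E]
  [AddCommGroup F] [Module R F] [TopologicalSpace F] {A : E →ₗ.[R] F} {C : F →L[R] E}

theorem injective_of_leftInverse (hC : ∀ x : A.domain, C (A x) = x) : Function.Injective A :=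
  fun x y hxy => Subtype.ext <| by rw [← hC x, ← hC y, hxy]

theorem mem_range_iff_mem_graph_of_leftInverse (hC : ∀ x : A.domain, C (A x) = x) (z : F) :
    z ∈ LinearMap.range A.toFun ↔ (C z, z) ∈ A.graph := by
  constructor
  · rintro ⟨x, rfl⟩
    simpa only [toFun_eq_coe, hC x] using A.mem_graph x
  · rw [mem_graph_iff]
    rintro ⟨x, -, hx⟩
    exact ⟨x, hx⟩

theorem isClosed_range_of_leftInverse (hA : A.IsClosed) (hC : ∀ x : A.domain, C (A x) = x) :
    _root_.IsClosed (LinearMap.range A.toFun : Set F) := by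
  have hpre : (LinearMap.range A.toFun : Set F) = (fun z => (C z, z)) ⁻¹' A.graph :=
    Set.ext (mem_range_iff_mem_graph_of_leftInverse hC)
  rw [hpre]
  exact hA.preimage (C.continuous.prodMk continuous_id)

end LeftInverse

section Adjoint

variable {𝕜 E F : Type*} [RCLike 𝕜] [NormedAddCommGroup E] [InnerProductSpace 𝕜 E]
  [NormedAddCommGroup F] [InnerProductSpace 𝕜 F] [CompleteSpace E]

theorem exists_adjoint_eq_zero_of_mem_orthogonal_range {T : E →ₗ.[𝕜] F}
    (hT : Dense (T.domain : Set E)) {y : F} (hy : y ∈ (LinearMap.range T.toFun)ᗮ) :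
    ∃ hy' : y ∈ T†.domain, T† ⟨y, hy'⟩ = 0 := by
  have hinner : ∀ x : T.domain, inner 𝕜 (0 : E) x = inner 𝕜 y (T x) := fun x => by
    rw [inner_zero_left, eq_comm, inner_eq_zero_symm]
    exact hy (T x) ⟨x, rfl⟩
  have hdom : y ∈ T†.domain := mem_adjoint_domain_of_exists y ⟨0, hinner⟩
  exact ⟨hdom, adjoint_apply_eq hT ⟨y, hdom⟩ hinner⟩

theorem surjective_of_leftInverse_of_ker_adjoint_le {A : E →ₗ.[𝕜] E} {C : E →L[𝕜] E}
    (hdense : Dense (A.domain : Set E)) (hA : A.IsClosed) (hC : ∀ x : A.domain, C (A x) = x)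
    (hker : ∀ y : A†.domain, A† y = 0 → ∃ h : (y : E) ∈ A.domain, A ⟨(y : E), h⟩ = 0) :
    Function.Surjective A := by
  have horth : (LinearMap.range A.toFun)ᗮ = ⊥ := by
    refine (Submodule.eq_bot_iff _).2 fun y hy => ?_
    obtain ⟨hy', hAy⟩ := exists_adjoint_eq_zero_of_mem_orthogonal_range hdense hy
    obtain ⟨hyA, hAy0⟩ := hker ⟨y, hy'⟩ hAy
    exact congrArg Subtype.val (injective_of_leftInverse hC (hAy0.trans A.map_zero.symm))
  have htop : LinearMap.range A.toFun = ⊤ := by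
    rw [← (isClosed_range_of_leftInverse hA hC).submodule_topologicalClosure_eq,
      Submodule.topologicalClosure_eq_top_iff, horth]
  exact LinearMap.range_eq_top.1 htop

end Adjoint

end LinearPMap

theorem PMapInv.of_leftInverse_of_surjective {E : Type*} [NormedAddCommGroup E]
    [InnerProductSpace ℂ E] {A : E →ₗ.[ℂ] E} {C : E →L[ℂ] E}
    (hC : ∀ x : A.domain, C (A x) = x) (hsurj : Function.Surjective A) : PMapInv A := by
  refine ⟨C, fun y => ?_, hC⟩
  obtain ⟨x, rfl⟩ := hsurj y
  rw [hC x]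
  exact ⟨x.2, rfl⟩

theorem stmt_11 (A : H →ₗ.[ℂ] H) (hclosed : A.IsClosed)
    (hdense : Dense (A.domain : Set H))
    (hker : ∀ y : A†.domain, A† y = 0 → ∃ h : (y : H) ∈ A.domain, A ⟨(y : H), h⟩ = 0)
    (h : PMapLeftInv A) : PMapInv A := by
  obtain ⟨C, hC⟩ := h
  exact .of_leftInverse_of_surjective hC
    (surjective_of_leftInverse_of_ker_adjoint_le hdense hclosed hC hker)
end

section
/- A right invertible closed hyponormal operator is invertible. -/
open LinearPMap

variable {H : Type*} [NormedAddCommGroup H] [InnerProductSpace ℂ H] [CompleteSpace H]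

/-! A hyponormal operator has `ker A ⊆ ker A†`, and `ker A†` is orthogonal to the range of `A`,
which is all of `H` when `A` is right invertible. Hence `A` is injective, and an injective
operator with a bounded right inverse `B` also satisfies `B ∘ A ⊆ I`. -/

namespace LinearPMap

variable {𝕜 E F : Type*} [RCLike 𝕜] [NormedAddCommGroup E] [InnerProductSpace 𝕜 E]
  [NormedAddCommGroup F] [InnerProductSpace 𝕜 F] [CompleteSpace E]

theorem inner_map_eq_zero_of_adjoint_apply_eq_zero {A : E →ₗ.[𝕜] F}
    (hdense : Dense (A.domain : Set E)) {y : A†.domain} (hy : A† y = 0) (x : A.domain) :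
    inner 𝕜 (y : F) (A x) = 0 := by
  rw [← adjoint_isFormalAdjoint hdense y x, hy, inner_zero_left]

theorem eq_zero_of_adjoint_apply_eq_zero_of_surjective {A : E →ₗ.[𝕜] F}
    (hdense : Dense (A.domain : Set E)) (hsurj : Function.Surjective A)
    {y : A†.domain} (hy : A† y = 0) : (y : F) = 0 := by
  obtain ⟨x, hx⟩ := hsurj y
  have hyx := inner_map_eq_zero_of_adjoint_apply_eq_zero hdense hy x
  rwa [hx, inner_self_eq_zero] at hyx

end LinearPMap

theorem PMapRightInv.surjective {E : Type*} [NormedAddCommGroup E] [InnerProductSpace ℂ E]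
    {A : E →ₗ.[ℂ] E} (h : PMapRightInv A) :
    Function.Surjective A := by
  obtain ⟨B, hB⟩ := h
  intro y
  obtain ⟨hy, hAy⟩ := hB y
  exact ⟨⟨B y, hy⟩, hAy⟩

theorem PMapRightInv.pmapInv_of_injective {E : Type*} [NormedAddCommGroup E]
    [InnerProductSpace ℂ E] {A : E →ₗ.[ℂ] E} (h : PMapRightInv A)
    (hinj : ∀ x : A.domain, A x = 0 → x = 0) : PMapInv A := by
  obtain ⟨B, hB⟩ := h
  refine ⟨B, hB, fun x => ?_⟩
  obtain ⟨hy, hAy⟩ := hB (A x)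
  have hBx : (⟨B (A x), hy⟩ : A.domain) - x = 0 :=
    hinj _ (by rw [LinearPMap.map_sub, hAy, sub_self])
  exact sub_eq_zero.mp (congrArg Subtype.val hBx)

theorem stmt_13_general (A : H →ₗ.[ℂ] H)
    (hdense : Dense (A.domain : Set H))
    (hsub : ∀ x : A.domain, (x : H) ∈ A†.domain)
    (hhyp : ∀ x : A.domain, ‖A† ⟨(x : H), hsub x⟩‖ ≤ ‖A x‖)
    (h : PMapRightInv A) : PMapInv A := by
  refine h.pmapInv_of_injective fun x hx => Subtype.ext ?_
  have hadj : A† ⟨(x : H), hsub x⟩ = 0 :=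
    norm_le_zero_iff.mp ((hhyp x).trans_eq (by rw [hx, norm_zero]))
  exact eq_zero_of_adjoint_apply_eq_zero_of_surjective hdense h.surjective hadj

theorem stmt_13 (A : H →ₗ.[ℂ] H) (hclosed : A.IsClosed)
    (hdense : Dense (A.domain : Set H))
    (hsub : ∀ x : A.domain, (x : H) ∈ A†.domain)
    (hhyp : ∀ x : A.domain, ‖A† ⟨(x : H), hsub x⟩‖ ≤ ‖A x‖)
    (h : PMapRightInv A) : PMapInv A :=
  stmt_13_general A hdense hsub hhyp h
end
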